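/- Let N ≥ 5 and m ≥ 1 be integers. In the quiver Γ^1_{A_{N−3}} of diagonals of a regular N-gon, the sectional paths of length m starting at a diagonal {i,j} are exactly the sequences {i,j}, {i,j+1}, {i,j+2}, …, {i,j+m} and {j,i}, {j,i+1}, {j,i+2}, …, {j,i+m} (indices mod N), in each case provided that every term of the sequence is a diagonal of the N-gon. -/

import Mathlib

/-!
The first arrow out of `{i, j}` decides which endpoint `a` stays fixed. After an arrow
`{a, c} → {a, c + 1}`, moving the endpoint `a` would reach `{c + 1, a + 1}`, whose `τ_1`-translate
is `{a, c}`; sectionality forbids this, so every arrow moves the free endpoint again. Conversely,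
along `{a, b + s}` the translate `τ_1 {a, b + s + 1} = {a - 1, b + s}` could only equal
`{a, b + s - 1}` if `a = b + s`, which no diagonal allows.
-/

/-- A diagonal of the regular `N`-gon with vertices labelled by `ZMod N`:
an unordered pair `{a,b}` with `b ∉ {a-1, a, a+1}`. -/
def IsDiag (N : ℕ) (p : Sym2 (ZMod N)) : Prop :=
  ∃ a b : ZMod N, p = s(a, b) ∧ b ≠ a ∧ b ≠ a + 1 ∧ b ≠ a - 1

/-- An arrow `D → D'` of the quiver `Γ^1_{A_{N-3}}` of diagonals of the
regular `N`-gon: `D` and `D'` are diagonals, and `D'` is obtained from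
`D = {a,b}` by replacing the endpoint `b` by `b+1`. -/
def Arrow1 (N : ℕ) (D D' : Sym2 (ZMod N)) : Prop :=
  IsDiag N D ∧ IsDiag N D' ∧ ∃ a b : ZMod N, D = s(a, b) ∧ D' = s(a, b + 1)

/-- `p 0 → p 1 → ⋯ → p m` is a sectional path in `Γ^1_{A_{N-3}}`: each step is
an arrow, and `τ_1 (p (s+1)) ≠ p (s-1)` for `0 < s < m`, where
`τ_1 {a,b} = {a-1, b-1}`. -/
def IsSectPath1 (N m : ℕ) (p : Fin (m+1) → Sym2 (ZMod N)) : Prop :=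
  (∀ s : Fin m, Arrow1 N (p s.castSucc) (p s.succ)) ∧
  ∀ (s : ℕ) (_ : 1 ≤ s) (h2 : s + 1 ≤ m),
    Sym2.map (fun x => x - 1) (p ⟨s+1, by omega⟩) ≠ p ⟨s-1, by omega⟩

lemma IsDiag.ne {N : ℕ} {x y : ZMod N} (h : IsDiag N s(x, y)) : x ≠ y := by
  obtain ⟨a, b, hab, hba, -, -⟩ := h
  rcases Sym2.eq_iff.mp hab with ⟨rfl, rfl⟩ | ⟨rfl, rfl⟩
  exacts [hba.symm, hba]

lemma Arrow1.eq_of_map_sub_one_ne {N : ℕ} {a c : ZMod N} {D : Sym2 (ZMod N)}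
    (harr : Arrow1 N s(a, c + 1) D) (hsec : D.map (· - 1) ≠ s(a, c)) :
    D = s(a, c + 1 + 1) := by
  obtain ⟨-, -, a', b', hsrc, rfl⟩ := harr
  rcases Sym2.eq_iff.mp hsrc with ⟨rfl, rfl⟩ | ⟨rfl, rfl⟩
  · rfl
  · exact absurd (by simp [Sym2.eq_swap]) hsec

lemma map_sub_one_ne_of_ne {R : Type*} [Ring R] {a c : R} (h : a ≠ c) :
    s(a, c + 1).map (· - 1) ≠ s(a, c - 1) := by
  have : Nontrivial R := nontrivial_of_ne a c h
  rw [Sym2.map_mk, add_sub_cancel_right, Ne, Sym2.eq_iff]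
  rintro (⟨h1, -⟩ | ⟨-, rfl⟩)
  exacts [one_ne_zero (sub_eq_self.mp h1), h rfl]

namespace IsSectPath1

variable {N m : ℕ} {p : Fin (m + 1) → Sym2 (ZMod N)}

lemma isDiag (hp : IsSectPath1 N m p) (h0 : IsDiag N (p 0)) (s : Fin (m + 1)) :
    IsDiag N (p s) :=
  Fin.cases h0 (fun t => (hp.1 t).2.1) s

lemma eq_of_first_arrow (hm : 1 ≤ m) {a b : ZMod N} (hp : IsSectPath1 N m p)
    (h0 : p 0 = s(a, b)) (h1 : p ⟨1, by omega⟩ = s(a, b + 1)) (s : Fin (m + 1)) :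
    p s = s(a, b + (s.val : ZMod N)) := by
  suffices ∀ k (hk : k ≤ m), p ⟨k, by omega⟩ = s(a, b + (k : ZMod N)) from this s s.is_le
  intro k
  induction k using Nat.twoStepInduction with
  | zero => exact fun _ => by simpa using h0
  | one => exact fun _ => by simpa using h1
  | more n ihn ihn1 =>
    intro hk
    have hcur : p ⟨n + 1, by omega⟩ = s(a, b + n + 1) := by
      rw [ihn1 (by omega), Nat.cast_succ, add_assoc]
    have harr := hp.1 ⟨n + 1, by omega⟩
    rw [Fin.castSucc_mk, Fin.succ_mk, hcur] at harr
    have hsec := hp.2 (n + 1) (by omega) (by omega)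
    simp only [Nat.add_sub_cancel, ihn (by omega)] at hsec
    exact (harr.eq_of_map_sub_one_ne hsec).trans (by push_cast; congr 1; ring)

end IsSectPath1

lemma isSectPath1_of_forall_eq {N m : ℕ} {a b : ZMod N} {p : Fin (m + 1) → Sym2 (ZMod N)}
    (hp : ∀ s : Fin (m + 1), p s = s(a, b + (s.val : ZMod N))) (hd : ∀ s, IsDiag N (p s)) :
    IsSectPath1 N m p := by
  refine ⟨fun s => ⟨hd _, hd _, a, b + s.val, hp _, ?_⟩, fun s hs1 hs2 => ?_⟩
  · rw [hp, Fin.val_succ, Nat.cast_succ, add_assoc]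
  · have hdiag := hd ⟨s, by omega⟩
    rw [hp] at hdiag
    rw [hp, hp]
    convert map_sub_one_ne_of_ne hdiag.ne using 3 <;> push_cast [Nat.cast_sub hs1] <;> ring

theorem stmt12_general (N m : ℕ) (hm : 1 ≤ m) (i j : ZMod N)
    (hij : IsDiag N s(i, j))
    (p : Fin (m+1) → Sym2 (ZMod N)) (h0 : p 0 = s(i, j)) :
    IsSectPath1 N m p ↔
      ((∀ s : Fin (m+1), p s = s(i, j + (s.val : ZMod N))) ∧
        ∀ s, IsDiag N (p s)) ∨
      ((∀ s : Fin (m+1), p s = s(j, i + (s.val : ZMod N))) ∧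
        ∀ s, IsDiag N (p s)) := by
  constructor
  · intro hp
    have hd := hp.isDiag (h0 ▸ hij)
    obtain ⟨-, -, a, b, hsrc, htgt⟩ := hp.1 ⟨0, hm⟩
    rw [show Fin.castSucc ⟨0, hm⟩ = (0 : Fin (m + 1)) from rfl, h0, Sym2.eq_iff] at hsrc
    rcases hsrc with ⟨rfl, rfl⟩ | ⟨rfl, rfl⟩
    · exact .inl ⟨hp.eq_of_first_arrow hm h0 htgt, hd⟩
    · exact .inr ⟨hp.eq_of_first_arrow hm (h0.trans Sym2.eq_swap) htgt, hd⟩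
  · rintro (⟨hp, hd⟩ | ⟨hp, hd⟩) <;> exact isSectPath1_of_forall_eq hp hd

/-- The sectional paths of length `m` in `Γ^1_{A_{N-3}}` starting at a
diagonal `{i,j}` are exactly the sequences `{i,j}, {i,j+1}, …, {i,j+m}` and
`{j,i}, {j,i+1}, …, {j,i+m}`, in each case provided every term of the sequence
is a diagonal of the `N`-gon. -/
theorem stmt12 (N m : ℕ) (hN : 5 ≤ N) (hm : 1 ≤ m) (i j : ZMod N)
    (hij : IsDiag N s(i, j))
    (p : Fin (m+1) → Sym2 (ZMod N)) (h0 : p 0 = s(i, j)) :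
    IsSectPath1 N m p ↔
      ((∀ s : Fin (m+1), p s = s(i, j + (s.val : ZMod N))) ∧
        ∀ s, IsDiag N (p s)) ∨
      ((∀ s : Fin (m+1), p s = s(j, i + (s.val : ZMod N))) ∧
        ∀ s, IsDiag N (p s)) :=
  stmt12_general N m hm i j hij p h0
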